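/- Let X be a set, F ⊆ X, S a set of subsets of X, B ∈ K_F(S), and R1, R2 ⊆ B. Then R1* ⊎ R2* = R1* ⊎_F R2*. -/

import Mathlib

/-!
Every element of `R*` is the union `⋃₀ C` of a finite nonempty `C ⊆ R`. Given `⋃₀ C1 ∪ ⋃₀ C2`
with `C1 ⊆ R1`, `C2 ⊆ R2`, drop from `C2` the members it shares with `C1` (or symmetrically):
the two remaining subfamilies of `B` have no common member, so their unions meet only outside `F`
because the members of `B` are pairwise `F`-disjoint. Only when `C1 = C2` does nothing remain,
and then the two components coincide.
-/

namespace SharingPaper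

/-- `var(S) = ∪ {G | G ∈ S}`. -/
def varS {α : Type*} (S : Set (Set α)) : Set α := ⋃ G ∈ S, G

/-- Closure `S*`: the least superset of `S` closed under binary unions. -/
def closure {α : Type*} (S : Set (Set α)) : Set (Set α) :=
  ⋂₀ {S' | S ⊆ S' ∧ ∀ G1 ∈ S', ∀ G2 ∈ S', G1 ∪ G2 ∈ S'}

/-- Pairwise union `S1 ⊎ S2`. -/
def pairUnion {α : Type*} (S1 S2 : Set (Set α)) : Set (Set α) :=
  {G | ∃ G1 ∈ S1, ∃ G2 ∈ S2, G = G1 ∪ G2}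

/-- `S^{*F}`: the least superset `S'` of `S` such that `G1 ∪ G2 ∈ S'` whenever
`G1, G2 ∈ S'` and `G1 ∩ G2 ∩ F = ∅`. -/
def closureF {α : Type*} (Fv : Set α) (S : Set (Set α)) : Set (Set α) :=
  ⋂₀ {S' | S ⊆ S' ∧ ∀ G1 ∈ S', ∀ G2 ∈ S', G1 ∩ G2 ∩ Fv = ∅ → G1 ∪ G2 ∈ S'}

/-- `S1 ⊎_F S2`. -/
def pairUnionF {α : Type*} (Fv : Set α) (S1 S2 : Set (Set α)) : Set (Set α) :=
  {G | ∃ G1 ∈ S1, ∃ G2 ∈ S2, (G1 ≠ G2 → G1 ∩ G2 ∩ Fv = ∅) ∧ G = G1 ∪ G2}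

/-- The Filé decomposition `K_F(S)`. -/
def KF {α : Type*} (Fv : Set α) (S : Set (Set α)) : Set (Set (Set α)) :=
  {B | B ⊆ S ∧ Fv ⊆ varS B ∧
    ∀ G1 ∈ B, ∀ G2 ∈ B, G1 ≠ G2 → G1 ∩ G2 ∩ Fv = ∅}

section

variable {α : Type*}

lemma subset_closure (R : Set (Set α)) : R ⊆ closure R :=
  fun _ hG _ hS' => hS'.1 hG

lemma union_mem_closure {R : Set (Set α)} {G1 G2 : Set α}
    (h1 : G1 ∈ closure R) (h2 : G2 ∈ closure R) : G1 ∪ G2 ∈ closure R :=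
  fun S' hS' => hS'.2 G1 (h1 S' hS') G2 (h2 S' hS')

lemma closure_subset {R T : Set (Set α)} (hRT : R ⊆ T)
    (hT : ∀ G1 ∈ T, ∀ G2 ∈ T, G1 ∪ G2 ∈ T) : closure R ⊆ T :=
  fun _ hG => hG T ⟨hRT, hT⟩

lemma sUnion_mem_closure {R C : Set (Set α)} (hC : C.Finite) (hCR : C ⊆ R)
    (hne : C.Nonempty) : ⋃₀ C ∈ closure R := by
  induction C, hC using Set.Finite.induction_on with
  | empty => exact absurd hne Set.not_nonempty_empty
  | @insert G C _ _ ih =>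
    obtain ⟨hG, hCR⟩ := Set.insert_subset_iff.mp hCR
    rw [Set.sUnion_insert]
    rcases C.eq_empty_or_nonempty with rfl | hC
    · simpa using subset_closure R hG
    · exact union_mem_closure (subset_closure R hG) (ih hCR hC)

lemma mem_closure_iff {R : Set (Set α)} {G : Set α} :
    G ∈ closure R ↔ ∃ C ⊆ R, C.Finite ∧ C.Nonempty ∧ G = ⋃₀ C := by
  refine ⟨fun hG => closure_subset (T := {G | ∃ C ⊆ R, C.Finite ∧ C.Nonempty ∧ G = ⋃₀ C})
    ?_ ?_ hG, ?_⟩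
  · exact fun G hG => ⟨{G}, by simpa using hG, Set.finite_singleton G, ⟨G, rfl⟩, by simp⟩
  · rintro _ ⟨C1, hC1R, hC1, hne1, rfl⟩ _ ⟨C2, hC2R, hC2, -, rfl⟩
    exact ⟨C1 ∪ C2, Set.union_subset hC1R hC2R, hC1.union hC2,
      hne1.mono Set.subset_union_left, (Set.sUnion_union C1 C2).symm⟩
  · rintro ⟨C, hCR, hC, hne, rfl⟩
    exact sUnion_mem_closure hC hCR hne

lemma sUnion_inter_sUnion_inter_eq_empty {Fv : Set α} {B C D : Set (Set α)}
    (hB : B.Pairwise fun G1 G2 => G1 ∩ G2 ∩ Fv = ∅) (hC : C ⊆ B) (hD : D ⊆ B)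
    (hCD : Disjoint C D) : ⋃₀ C ∩ ⋃₀ D ∩ Fv = ∅ := by
  refine Set.eq_empty_of_forall_notMem ?_
  rintro x ⟨⟨⟨G1, hG1, hx1⟩, G2, hG2, hx2⟩, hxF⟩
  have hne : G1 ≠ G2 := fun h => Set.disjoint_left.mp hCD hG1 (h ▸ hG2)
  exact (hB (hC hG1) (hD hG2) hne).subset ⟨⟨hx1, hx2⟩, hxF⟩

lemma pairUnionF_subset_pairUnion (Fv : Set α) (S1 S2 : Set (Set α)) :
    pairUnionF Fv S1 S2 ⊆ pairUnion S1 S2 :=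
  fun _ ⟨G1, hG1, G2, hG2, _, hG⟩ => ⟨G1, hG1, G2, hG2, hG⟩

lemma pairUnionF_comm (Fv : Set α) (S1 S2 : Set (Set α)) :
    pairUnionF Fv S1 S2 = pairUnionF Fv S2 S1 := by
  have key : ∀ S1 S2 : Set (Set α), pairUnionF Fv S1 S2 ⊆ pairUnionF Fv S2 S1 := by
    rintro S1 S2 _ ⟨G1, hG1, G2, hG2, hdisj, rfl⟩
    refine ⟨G2, hG2, G1, hG1, fun hne => ?_, Set.union_comm G1 G2⟩
    rw [Set.inter_comm G2 G1]
    exact hdisj hne.symm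
  exact (key S1 S2).antisymm (key S2 S1)

lemma sUnion_union_sUnion_mem_pairUnionF {Fv : Set α} {B R1 R2 C1 C2 : Set (Set α)}
    (hB : B.Pairwise fun G1 G2 => G1 ∩ G2 ∩ Fv = ∅) (hR1 : R1 ⊆ B) (hR2 : R2 ⊆ B)
    (hC1 : ⋃₀ C1 ∈ closure R1) (hC1R : C1 ⊆ R1) (hC2R : C2 ⊆ R2) (hC2 : C2.Finite)
    (hne : (C2 \ C1).Nonempty) :
    ⋃₀ C1 ∪ ⋃₀ C2 ∈ pairUnionF Fv (closure R1) (closure R2) := by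
  refine ⟨⋃₀ C1, hC1, ⋃₀ (C2 \ C1),
    sUnion_mem_closure hC2.sdiff (Set.sdiff_subset.trans hC2R) hne, fun _ => ?_, ?_⟩
  · exact sUnion_inter_sUnion_inter_eq_empty hB (hC1R.trans hR1)
      (Set.sdiff_subset.trans (hC2R.trans hR2)) Set.disjoint_sdiff_right
  · rw [← Set.sUnion_union, ← Set.sUnion_union, Set.union_sdiff_self]

end

/-- if `B ∈ K_F(S)` and `R1, R2 ⊆ B` then `R1* ⊎ R2* = R1* ⊎_F R2*`. -/
theorem stmt14 {α : Type*} (Fv : Set α) (S : Set (Set α))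
    (B : Set (Set α)) (hB : B ∈ KF Fv S)
    (R1 R2 : Set (Set α)) (hR1 : R1 ⊆ B) (hR2 : R2 ⊆ B) :
    pairUnion (closure R1) (closure R2) = pairUnionF Fv (closure R1) (closure R2) := by
  have hBdisj : B.Pairwise fun G1 G2 => G1 ∩ G2 ∩ Fv = ∅ :=
    fun G1 hG1 G2 hG2 => hB.2.2 G1 hG1 G2 hG2
  refine Set.Subset.antisymm ?_ (pairUnionF_subset_pairUnion Fv _ _)
  rintro _ ⟨G1, hG1, G2, hG2, rfl⟩
  obtain ⟨C1, hC1R, hC1, -, rfl⟩ := mem_closure_iff.mp hG1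
  obtain ⟨C2, hC2R, hC2, -, rfl⟩ := mem_closure_iff.mp hG2
  by_cases h21 : (C2 \ C1).Nonempty
  · exact sUnion_union_sUnion_mem_pairUnionF hBdisj hR1 hR2 hG1 hC1R hC2R hC2 h21
  by_cases h12 : (C1 \ C2).Nonempty
  · rw [pairUnionF_comm, Set.union_comm]
    exact sUnion_union_sUnion_mem_pairUnionF hBdisj hR2 hR1 hG2 hC2R hC1R hC1 h12
  have hC : C1 = C2 := (Set.sdiff_eq_empty.mp (Set.not_nonempty_iff_eq_empty.mp h12)).antisymm
    (Set.sdiff_eq_empty.mp (Set.not_nonempty_iff_eq_empty.mp h21))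
  subst hC
  exact ⟨⋃₀ C1, hG1, ⋃₀ C1, hG2, fun h => absurd rfl h, rfl⟩

end SharingPaper
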